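/- For every integer k ≥ 1 and every real L > 0, there exists a complete directed graph G on a finite vertex set (with at least k+2 vertices) with arc lengths ℓ such that: the maximum of |ℓ_e| over all arcs e equals L; every cycle of cardinality at most k+1 has nonnegative length; and the minimum mean length of a cycle in G equals −L/k (in particular, some cycle has mean length exactly −L/k). -/

import Mathlib

open Finset

/-- Euclidean inner product on `ℝⁿ`. -/
def dotp {n : ℕ} (p y : Fin n → ℝ) : ℝ := ∑ i, p i * y i

/-- A bundle is a 0-1 vector. -/
def IsBundle {n : ℕ} (y : Fin n → ℝ) : Prop := ∀ i, y i = 0 ∨ y i = 1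

/-- The cyclically next index in `Fin m`. -/
def cnext {m : ℕ} (i : Fin m) : Fin m := ⟨(i.val + 1) % m, Nat.mod_lt _ i.pos⟩

-- The length of the arc of the bidding graph from bid bundle `x t` to bundle `y`:
-- the minimum of `p s · (y - x t)` over all observations `s` bidding the same bundle as `t`.
open Classical in
noncomputable def arcLen {n T : ℕ} (p x : Fin T → Fin n → ℝ) (t : Fin T)
    (y : Fin n → ℝ) : ℝ :=
  (Finset.univ.filter fun s => x s = x t).inf' ⟨t, by simp⟩
    (fun s => dotp (p s) (y - x t))

/-- `v` is an `ε`-approximate virtual valuation function for the data `(p, x)`. -/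
def IsApproxVV  {n T : ℕ} (p x : Fin T → Fin n → ℝ) (ε : ℝ)
    (v : (Fin n → ℝ) → ℝ) : Prop :=
  ∀ t : Fin T, ∀ y : Fin n → ℝ, IsBundle y →
    v (x t) - dotp (p t) (x t) ≥ v y - dotp (p t) y - ε

/-- `v` is individually rational for the data `(p, x)`. -/
def IndivRational {n T : ℕ} (p x : Fin T → Fin n → ℝ)
    (v : (Fin n → ℝ) → ℝ) : Prop :=
  ∀ t : Fin T, v (x t) ≥ dotp (p t) (x t)

/-- The set of mean lengths of cycles of the bidding graph. -/
noncomputable def meanCycleLens {n T : ℕ} (p x : Fin T → Fin n → ℝ) : Set ℝ :=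
  {r | ∃ m : ℕ, 2 ≤ m ∧ ∃ c : Fin m → Fin T,
      Function.Injective (fun i => x (c i)) ∧
      r = (∑ i : Fin m, arcLen p x (c i) (x (c (cnext i)))) / m}

/-
Take the vertices `ℤ/(k+2)`, give each successor arc `a → a + 1` length `-L/k` and every other
arc length `L`. The Hamiltonian cycle of successor arcs has mean `-L/k`, and no cycle does
better since every arc is at least `-L/k`. A cycle on `m ≤ k + 1 < k + 2` vertices cannot
consist of successor arcs only (its steps would add up to `m ≢ 0`), so it uses an arc of
length `L` and at most `k` further arcs of length `≥ -L/k`.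
-/

section CyclicSuccessor

variable {m : ℕ}

theorem cnext_eq_add_one [NeZero m] (i : Fin m) : cnext i = i + 1 := by
  ext
  simp [cnext, Fin.val_add]

theorem sum_comp_cnext {M : Type*} [AddCommMonoid M] (f : Fin m → M) :
    ∑ i, f (cnext i) = ∑ i, f i := by
  cases m with
  | zero => simp
  | succ n =>
    simp_rw [cnext_eq_add_one]
    exact Equiv.sum_comp (Equiv.addRight (1 : Fin (n + 1))) f

theorem nsmul_eq_zero_of_forall_cnext_eq_add {G : Type*} [AddCommGroup G] (c : Fin m → G)
    (g : G) (h : ∀ i, c (cnext i) = c i + g) : m • g = 0 := by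
  calc m • g = ∑ i, (c (cnext i) - c i) := by simp [h]
    _ = 0 := by rw [sum_sub_distrib, sum_comp_cnext, sub_self]

end CyclicSuccessor

def cycleLen {V : Type*} (ℓ : V → V → ℝ) {m : ℕ} (c : Fin m → V) : ℝ :=
  ∑ i, ℓ (c i) (c (cnext i))

theorem mul_le_cycleLen {V : Type*} {ℓ : V → V → ℝ} {s : ℝ} (hs : ∀ a b, s ≤ ℓ a b)
    {m : ℕ} (c : Fin m → V) : m * s ≤ cycleLen ℓ c := by
  simpa [cycleLen] using
    card_nsmul_le_sum univ (fun i => ℓ (c i) (c (cnext i))) s fun i _ => hs _ _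

section SuccArcLen

variable {N : ℕ} [NeZero N] {s L : ℝ}

def succArcLen (s L : ℝ) (a b : Fin N) : ℝ := if b = a + 1 then s else L

theorem le_succArcLen (hs : s ≤ L) (a b : Fin N) : s ≤ succArcLen s L a b := by
  unfold succArcLen; split_ifs <;> simp [hs]

theorem isGreatest_abs_succArcLen (hN : 3 ≤ N) (hsL : |s| ≤ L) :
    IsGreatest {r : ℝ | ∃ a b : Fin N, a ≠ b ∧ r = |succArcLen s L a b|} L := by
  have hL : 0 ≤ L := (abs_nonneg s).trans hsL
  refine ⟨⟨1, 0, ?_, ?_⟩, ?_⟩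
  · simp [Fin.ext_iff, Nat.mod_eq_of_lt (by omega : 1 < N)]
  · have h20 : (0 : Fin N) ≠ 1 + 1 := by
      simp [Fin.ext_iff, Fin.val_add, Nat.mod_eq_of_lt (by omega : 1 < N),
        Nat.mod_eq_of_lt (by omega : 2 < N)]
    simp [succArcLen, h20, abs_of_nonneg hL]
  · rintro r ⟨a, b, -, rfl⟩
    unfold succArcLen; split_ifs <;> simp [hsL, abs_of_nonneg hL]

open Fin.CommRing in
theorem le_cycleLen_succArcLen (hs : s ≤ L) {m : ℕ} (hm : 0 < m) (hmN : m < N)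
    (c : Fin m → Fin N) : L + (m - 1) * s ≤ cycleLen (succArcLen s L) c := by
  obtain ⟨i₀, hi₀⟩ : ∃ i, c (cnext i) ≠ c i + 1 := by
    by_contra! h
    have := nsmul_eq_zero_of_forall_cnext_eq_add c 1 h
    rw [nsmul_one, Fin.natCast_eq_zero] at this
    exact absurd (Nat.le_of_dvd hm this) (by omega)
  have hrest : (m - 1 : ℝ) * s ≤ ∑ i ∈ univ.erase i₀, succArcLen s L (c i) (c (cnext i)) := by
    have := card_nsmul_le_sum (univ.erase i₀) _ s fun i _ => le_succArcLen hs (c i) (c (cnext i))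
    rwa [card_erase_of_mem (mem_univ _), card_univ, Fintype.card_fin, nsmul_eq_mul,
      Nat.cast_pred hm] at this
  calc L + (m - 1) * s
      ≤ succArcLen s L (c i₀) (c (cnext i₀)) +
          ∑ i ∈ univ.erase i₀, succArcLen s L (c i) (c (cnext i)) :=
        add_le_add (by simp [succArcLen, hi₀]) hrest
    _ = cycleLen (succArcLen s L) c :=
      add_sum_erase _ (fun i => succArcLen s L (c i) (c (cnext i))) (mem_univ i₀)

theorem isLeast_cycle_mean_succArcLen (hN : 2 ≤ N) (hs : s ≤ L) :
    IsLeast {r : ℝ | ∃ m : ℕ, 2 ≤ m ∧ ∃ c : Fin m → Fin N, Function.Injective c ∧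
      r = cycleLen (succArcLen s L) c / m} s := by
  refine ⟨⟨N, hN, id, Function.injective_id, ?_⟩, ?_⟩
  · have hN0 : (N : ℝ) ≠ 0 := by positivity
    simp [cycleLen, succArcLen, cnext_eq_add_one, hN0]
  · rintro r ⟨m, hm, c, -, rfl⟩
    rw [le_div_iff₀ (by positivity), mul_comm]
    exact mul_le_cycleLen (le_succArcLen hs) c

end SuccArcLen

/-- Tightness of Theorem `kcycle`: there is a complete directed graph with
maximum absolute arc length `L` in which every cycle of cardinality at most `k+1` has
nonnegative length, yet the minimum mean length of a cycle equals `-L / k`. -/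
theorem exists_graph_short_cycles_nonneg_minMean_eq {k : ℕ} (hk : 1 ≤ k)
    {L : ℝ} (hL : 0 < L) :
    ∃ (N : ℕ) (ℓ : Fin N → Fin N → ℝ),
      k + 2 ≤ N ∧
      IsGreatest {r : ℝ | ∃ a b : Fin N, a ≠ b ∧ r = |ℓ a b|} L ∧
      (∀ m : ℕ, 2 ≤ m → m ≤ k + 1 → ∀ c : Fin m → Fin N, Function.Injective c →
        0 ≤ ∑ i : Fin m, ℓ (c i) (c (cnext i))) ∧
      IsLeast {r : ℝ | ∃ m : ℕ, 2 ≤ m ∧ ∃ c : Fin m → Fin N, Function.Injective c ∧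
        r = (∑ i : Fin m, ℓ (c i) (c (cnext i))) / m} (-(L / k)) := by
  have hA : 0 ≤ L / k := by positivity
  have hAL : |-(L / k)| ≤ L := by
    rw [abs_neg, abs_of_nonneg hA]
    exact div_le_self hL.le (by exact_mod_cast hk)
  have hsL : -(L / k) ≤ L := (le_abs_self _).trans hAL
  refine ⟨k + 2, succArcLen (-(L / k)) L, le_rfl, isGreatest_abs_succArcLen (by omega) hAL,
    fun m hm hmk c _ => ?_, isLeast_cycle_mean_succArcLen (by omega) hsL⟩
  have hmk' : (m : ℝ) - 1 ≤ k := by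
    have : (m : ℝ) ≤ k + 1 := by exact_mod_cast hmk
    linarith
  calc 0 = L + k * -(L / k) := by field_simp; ring
    _ ≤ L + (m - 1) * -(L / k) := by
      linarith [mul_le_mul_of_nonpos_right hmk' (neg_nonpos.2 hA)]
    _ ≤ cycleLen (succArcLen (-(L / k)) L) c :=
      le_cycleLen_succArcLen hsL (by omega) (by omega) c
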